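/- arXiv:0908.2883 — 3 statements merged into one kernel-verified Lean document; each statement's English description precedes it below -/
import Mathlib

section
/- If T is a tree of order at least three and u is a leaf of T, then there exists a minimum paired-dominating set of T that does not contain u. -/
open SimpleGraph

/-- A set `S` is a paired-dominating set of `G`: every vertex outside `S` has a
neighbor in `S`, and the induced subgraph `G[S]` has a perfect matching
(a matching subgraph of `G` whose vertex set is exactly `S`). -/
def IsPDS {V : Type*} (G : SimpleGraph V) (S : Set V) : Prop :=
  (∀ v ∉ S, ∃ u ∈ S, G.Adj u v) ∧
    ∃ M : G.Subgraph, M.verts = S ∧ M.IsMatching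

/-- The paired-domination number of `G`. -/
noncomputable def gammaPr {V : Type*} (G : SimpleGraph V) : ℕ :=
  sInf {n | ∃ S : Set V, IsPDS G S ∧ S.ncard = n}

/-- `v` is a cut-vertex of `G`: deleting `v` disconnects two vertices that
were reachable from each other in `G`. -/
def IsCutVertex {V : Type*} (G : SimpleGraph V) (v : V) : Prop :=
  ∃ (a b : V) (ha : a ∈ ({v}ᶜ : Set V)) (hb : b ∈ ({v}ᶜ : Set V)),
    G.Reachable a b ∧
      ¬ (G.induce ({v}ᶜ : Set V)).Reachable ⟨a, ha⟩ ⟨b, hb⟩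

/-- `B` is a block of `G`: a maximal set of vertices inducing a connected
subgraph without a cut-vertex. -/
def IsBlock {V : Type*} (G : SimpleGraph V) (B : Set V) : Prop :=
  (G.induce B).Connected ∧ (∀ v : B, ¬ IsCutVertex (G.induce B) v) ∧
    ∀ C : Set V, B ⊆ C → (G.induce C).Connected →
      (∀ v : C, ¬ IsCutVertex (G.induce C) v) → C = B

/-- `G` is a block graph: connected, and every block is complete. -/
def IsBlockGraph {V : Type*} (G : SimpleGraph V) : Prop :=
  G.Connected ∧ ∀ B : Set V, IsBlock G B →
    ∀ a ∈ B, ∀ b ∈ B, a ≠ b → G.Adj a b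

/-- An end block: a block containing exactly one cut-vertex of `G`. -/
def IsEndBlock {V : Type*} (G : SimpleGraph V) (B : Set V) : Prop :=
  IsBlock G B ∧ ∃! v : V, v ∈ B ∧ IsCutVertex G v


lemma matching_deleteVerts {V : Type*} {G : SimpleGraph V} {M : G.Subgraph}
    (hM : M.IsMatching) (s : Set V)
    (hs : ∀ a ∈ s, ∀ b, M.Adj a b → b ∈ s) :
    (M.deleteVerts s).IsMatching := by
  intro v hv
  rw [Subgraph.deleteVerts_verts, Set.mem_diff] at hv
  obtain ⟨w, hw, huniq⟩ := hM hv.1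
  have hwns : w ∉ s := fun hws => hv.2 (hs w hws v hw.symm)
  refine ⟨w, ?_, ?_⟩
  · show (M.deleteVerts s).Adj v w
    rw [Subgraph.deleteVerts_adj]
    exact ⟨hv.1, hv.2, M.edge_vert hw.symm, hwns, hw⟩
  · intro y hy
    rw [Subgraph.deleteVerts_adj] at hy
    exact huniq y hy.2.2.2.2

lemma exists_PDS {V : Type*} [Fintype V] (G : SimpleGraph V)
    (hne : ∀ v : V, ∃ w, G.Adj v w) :
    ∃ S : Set V, (∀ v ∉ S, ∃ u ∈ S, G.Adj u v) ∧
      ∃ M : G.Subgraph, M.verts = S ∧ M.IsMatching := by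
  classical
  set K : Set ℕ := {k | ∃ M : G.Subgraph, M.IsMatching ∧ M.verts.ncard = k} with hK
  have h0 : (0 : ℕ) ∈ K := ⟨⊥, fun v hv => by simp at hv, by simp⟩
  have hbdd : BddAbove K := by
    refine ⟨Fintype.card V, fun k hk => ?_⟩
    obtain ⟨M, _, rfl⟩ := hk
    calc M.verts.ncard ≤ (Set.univ : Set V).ncard :=
          Set.ncard_le_ncard (Set.subset_univ M.verts) Set.finite_univ
      _ = Fintype.card V := by simp [Set.ncard_univ]
  obtain ⟨M, hM, hMc⟩ := Nat.sSup_mem ⟨0, h0⟩ hbdd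
  refine ⟨M.verts, ?_, M, rfl, hM⟩
  intro v hv
  obtain ⟨w, hw⟩ := hne v
  by_cases hwm : w ∈ M.verts
  · exact ⟨w, hwm, hw.symm⟩
  exfalso
  have hd : Disjoint M.support (G.subgraphOfAdj hw.symm).support := by
    rw [hM.support_eq_verts, (Subgraph.IsMatching.subgraphOfAdj hw.symm).support_eq_verts]
    simp only [subgraphOfAdj_verts]
    rw [Set.disjoint_right]
    rintro x (rfl | rfl) <;> simp_all
  have hM' : (M ⊔ G.subgraphOfAdj hw.symm).IsMatching :=
    hM.sup (Subgraph.IsMatching.subgraphOfAdj hw.symm) hd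
  have hcard : (M ⊔ G.subgraphOfAdj hw.symm).verts.ncard = sSup K + 2 := by
    have : (M ⊔ G.subgraphOfAdj hw.symm).verts = M.verts ∪ {w, v} := by
      simp [Subgraph.verts_sup]
    rw [this, Set.ncard_union_eq ?_ (Set.toFinite _) (Set.toFinite _)]
    · rw [hMc]
      congr 1
      rw [Set.ncard_pair hw.ne']
    · rw [Set.disjoint_right]; rintro x (rfl | rfl) <;> simp_all
  have hle : sSup K + 2 ≤ sSup K := le_csSup hbdd ⟨_, hM', hcard⟩
  omega

lemma walk_closed {V : Type*} {G : SimpleGraph V} {u v : V}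
    (hu : ∀ y, G.Adj u y → y = v) (hv : ∀ y, G.Adj v y → y = u) :
    ∀ {a b : V} (_ : G.Walk a b), a = u ∨ a = v → b = u ∨ b = v := by
  intro a b p
  induction p with
  | nil => exact id
  | cons h q ih =>
    rintro (rfl | rfl)
    · exact ih (Or.inr (hu _ h))
    · exact ih (Or.inl (hv _ h))

/-- If `T` is a tree of order at least three and `u` is a leaf of `T`, then
there exists a minimum paired-dominating set of `T` not containing `u`. -/
theorem stmt0 {V : Type*} [Fintype V] [DecidableEq V] (G : SimpleGraph V)
    [DecidableRel G.Adj] (hT : G.IsTree) (h3 : 3 ≤ Fintype.card V)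
    (u : V) (hu : G.degree u = 1) :
    ∃ S : Set V, IsPDS G S ∧ S.ncard = gammaPr G ∧ u ∉ S := by
  classical
  have hconn : G.Connected := hT.isConnected
  have hnontriv : Nontrivial V := Fintype.one_lt_card_iff_nontrivial.mp (by omega)
  have hnb : ∀ v : V, ∃ w, G.Adj v w := by
    intro v
    obtain ⟨z, hz⟩ := exists_ne v
    obtain ⟨p⟩ := hconn.preconnected v z
    cases p with
    | nil => exact absurd rfl hz
    | cons h q => exact ⟨_, h⟩
  have hset : {n | ∃ S : Set V, IsPDS G S ∧ S.ncard = n}.Nonempty := by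
    obtain ⟨S, hS1, hS2⟩ := exists_PDS G hnb
    exact ⟨S.ncard, S, ⟨hS1, hS2⟩, rfl⟩
  obtain ⟨S, hSP, hScard⟩ := Nat.sInf_mem hset
  by_cases hus : u ∈ S
  swap
  · exact ⟨S, hSP, hScard, hus⟩
  obtain ⟨hdom, M, hMv, hMm⟩ := hSP
  -- unique neighbor v of u
  obtain ⟨v, hvnb⟩ := Finset.card_eq_one.mp hu
  have hadj_uv : G.Adj u v := by
    rw [← SimpleGraph.mem_neighborFinset, hvnb]; exact Finset.mem_singleton_self v
  have huonly : ∀ y, G.Adj u y → y = v := by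
    intro y hy
    have h := (SimpleGraph.mem_neighborFinset G u y).mpr hy
    rw [hvnb, Finset.mem_singleton] at h; exact h
  have hune_v : u ≠ v := hadj_uv.ne
  have key : ∀ {a b : V}, M.Adj a b → ∀ y, M.Adj a y → y = b := by
    intro a b hab y hay
    exact (hMm (M.edge_vert hab)).unique hay hab
  have huM : u ∈ M.verts := by rw [hMv]; exact hus
  obtain ⟨p, hpadj, -⟩ := hMm huM
  have hMuv : M.Adj u v := (huonly p (M.adj_sub hpadj)) ▸ hpadj
  have hvS : v ∈ S := by rw [← hMv]; exact M.edge_vert hMuv.symm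
  -- second neighbor w of v
  obtain ⟨w, hvw, hwu⟩ : ∃ w, G.Adj v w ∧ w ≠ u := by
    by_contra hc
    push_neg at hc
    obtain ⟨z, hz⟩ : ∃ z : V, z ∉ ({u, v} : Finset V) := by
      by_contra h
      push_neg at h
      have h2 : (Finset.univ : Finset V) ⊆ {u, v} := fun x _ => h x
      have h4 := Finset.card_le_card h2
      have h3 : ({u, v} : Finset V).card ≤ 2 :=
        (Finset.card_insert_le _ _).trans (by simp)
      rw [Finset.card_univ] at h4
      omega
    obtain ⟨pw⟩ := hconn.preconnected u z
    have := walk_closed huonly hc pw (Or.inl rfl)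
    simp only [Finset.mem_insert, Finset.mem_singleton] at hz
    tauto
  have hwv : w ≠ v := hvw.ne'
  have hdomS' : ∀ t, t ∉ S → ∀ s ∈ S, G.Adj s t → s ≠ u := by
    intro t ht s _ hadj hsu
    subst hsu
    exact ht (by rw [huonly t hadj]; exact hvS)
  -- shared finishing step
  have finish : ∀ c : V, c ∉ S →
      (∃ M' : G.Subgraph, M'.verts = insert c (S \ {u}) ∧ M'.IsMatching) →
      ∃ S' : Set V, IsPDS G S' ∧ S'.ncard = gammaPr G ∧ u ∉ S' := by
    intro c hc hM'
    refine ⟨insert c (S \ {u}), ⟨?_, hM'⟩, ?_, ?_⟩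
    · intro t ht
      simp only [Set.mem_insert_iff, Set.mem_diff, Set.mem_singleton_iff, not_or] at ht
      by_cases htu : t = u
      · subst htu
        exact ⟨v, Or.inr ⟨hvS, hune_v.symm⟩, hadj_uv.symm⟩
      · have htS : t ∉ S := fun h => ht.2 ⟨h, htu⟩
        obtain ⟨s, hsS, hst⟩ := hdom t htS
        exact ⟨s, Or.inr ⟨hsS, hdomS' t htS s hsS hst⟩, hst⟩
    · have h1 : (insert c (S \ {u})).ncard = (S \ {u}).ncard + 1 :=
        Set.ncard_insert_of_notMem (fun h => hc h.1) (Set.toFinite _)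
      have h2 : (S \ {u}).ncard + 1 = S.ncard :=
        Set.ncard_diff_singleton_add_one hus (Set.toFinite _)
      rw [h1, h2]; exact hScard
    · rintro (rfl | ⟨-, h⟩)
      · exact hc hus
      · exact h rfl
  by_cases hwS : w ∈ S
  · -- Case B : w ∈ S
    have hwM : w ∈ M.verts := by rw [hMv]; exact hwS
    obtain ⟨x, hMwx, -⟩ := hMm hwM
    have hGwx : G.Adj w x := M.adj_sub hMwx
    have hxw : x ≠ w := hGwx.ne'
    have hxu : x ≠ u := by
      rintro rfl
      exact hwv (key hMuv w hMwx.symm)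
    have hxv : x ≠ v := by
      rintro rfl
      exact hwu (key hMuv.symm w hMwx.symm)
    have hxS : x ∈ S := by rw [← hMv]; exact M.edge_vert hMwx.symm
    have hclosed4 : ∀ a ∈ ({u, v, w, x} : Set V), ∀ b, M.Adj a b →
        b ∈ ({u, v, w, x} : Set V) := by
      rintro a ha b hab
      simp only [Set.mem_insert_iff, Set.mem_singleton_iff] at ha ⊢
      rcases ha with rfl | rfl | rfl | rfl
      · exact Or.inr (Or.inl (key hMuv b hab))
      · exact Or.inl (key hMuv.symm b hab)
      · exact Or.inr (Or.inr (Or.inr (key hMwx b hab)))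
      · exact Or.inr (Or.inr (Or.inl (key hMwx.symm b hab)))
    by_cases hy : ∃ y, G.Adj x y ∧ y ∉ S
    · -- B1
      obtain ⟨y, hxy, hyS⟩ := hy
      have hyv : y ≠ v := fun h => hyS (h ▸ hvS)
      have hyw : y ≠ w := fun h => hyS (h ▸ hwS)
      have hyx : y ≠ x := hxy.ne'
      apply finish y hyS
      have hMd := matching_deleteVerts hMm {u, v, w, x} hclosed4
      have hd1 : Disjoint (G.subgraphOfAdj hvw).support (G.subgraphOfAdj hxy).support := by
        rw [(Subgraph.IsMatching.subgraphOfAdj hvw).support_eq_verts,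
          (Subgraph.IsMatching.subgraphOfAdj hxy).support_eq_verts]
        simp only [subgraphOfAdj_verts]
        rw [Set.disjoint_left]
        intro z hz1 hz2
        simp only [Set.mem_insert_iff, Set.mem_singleton_iff] at hz1 hz2
        rcases hz1 with rfl | rfl <;> rcases hz2 with h | h
        · exact hxv h.symm
        · exact hyv h.symm
        · exact hxw h.symm
        · exact hyw h.symm
      have hMe := (Subgraph.IsMatching.subgraphOfAdj hvw).sup
        (Subgraph.IsMatching.subgraphOfAdj hxy) hd1
      have hd2 : Disjoint (M.deleteVerts {u, v, w, x}).support
          (G.subgraphOfAdj hvw ⊔ G.subgraphOfAdj hxy).support := by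
        rw [hMd.support_eq_verts, hMe.support_eq_verts]
        simp only [Subgraph.deleteVerts_verts, Subgraph.verts_sup, subgraphOfAdj_verts, hMv]
        rw [Set.disjoint_left]
        intro z hz1 hz2
        simp only [Set.mem_diff, Set.mem_insert_iff, Set.mem_singleton_iff, not_or] at hz1
        simp only [Set.mem_union, Set.mem_insert_iff, Set.mem_singleton_iff] at hz2
        rcases hz2 with (rfl | rfl) | (rfl | rfl)
        · exact hz1.2.2.1 rfl
        · exact hz1.2.2.2.1 rfl
        · exact hz1.2.2.2.2 rfl
        · exact hyS hz1.1
      refine ⟨M.deleteVerts {u, v, w, x} ⊔ (G.subgraphOfAdj hvw ⊔ G.subgraphOfAdj hxy),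
        ?_, hMd.sup hMe hd2⟩
      simp only [Subgraph.verts_sup, Subgraph.deleteVerts_verts, subgraphOfAdj_verts, hMv]
      ext z
      simp only [Set.mem_union, Set.mem_diff, Set.mem_insert_iff, Set.mem_singleton_iff]
      constructor
      · rintro (⟨hzS, hz⟩ | (rfl | rfl) | (rfl | rfl))
        · push_neg at hz
          exact Or.inr ⟨hzS, hz.1⟩
        · exact Or.inr ⟨hvS, hune_v.symm⟩
        · exact Or.inr ⟨hwS, hwu⟩
        · exact Or.inr ⟨hxS, hxu⟩
        · exact Or.inl rfl
      · rintro (rfl | ⟨hzS, hzu⟩)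
        · exact Or.inr (Or.inr (Or.inr rfl))
        · by_cases h1 : z = v
          · exact Or.inr (Or.inl (Or.inl h1))
          by_cases h2 : z = w
          · exact Or.inr (Or.inl (Or.inr h2))
          by_cases h3 : z = x
          · exact Or.inr (Or.inr (Or.inl h3))
          · exact Or.inl ⟨hzS, by push_neg; exact ⟨hzu, h1, h2, h3⟩⟩
    · -- B2 : contradiction with minimality
      push_neg at hy
      exfalso
      have hMd := matching_deleteVerts hMm {u, v, w, x} hclosed4
      have hd2 : Disjoint (M.deleteVerts {u, v, w, x}).support
          (G.subgraphOfAdj hvw).support := by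
        rw [hMd.support_eq_verts, (Subgraph.IsMatching.subgraphOfAdj hvw).support_eq_verts]
        simp only [Subgraph.deleteVerts_verts, subgraphOfAdj_verts, hMv]
        rw [Set.disjoint_left]
        intro z hz1 hz2
        simp only [Set.mem_diff, Set.mem_insert_iff, Set.mem_singleton_iff, not_or] at hz1
        simp only [Set.mem_insert_iff, Set.mem_singleton_iff] at hz2
        rcases hz2 with rfl | rfl
        · exact hz1.2.2.1 rfl
        · exact hz1.2.2.2.1 rfl
      have hMf := hMd.sup (Subgraph.IsMatching.subgraphOfAdj hvw) hd2
      have hverts : (M.deleteVerts {u, v, w, x} ⊔ G.subgraphOfAdj hvw).verts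
          = S \ {u, x} := by
        simp only [Subgraph.verts_sup, Subgraph.deleteVerts_verts, subgraphOfAdj_verts, hMv]
        ext z
        simp only [Set.mem_union, Set.mem_diff, Set.mem_insert_iff, Set.mem_singleton_iff]
        constructor
        · rintro (⟨hzS, hz⟩ | rfl | rfl)
          · push_neg at hz
            exact ⟨hzS, by push_neg; exact ⟨hz.1, hz.2.2.2⟩⟩
          · exact ⟨hvS, by push_neg; exact ⟨hune_v.symm, hxv.symm⟩⟩
          · exact ⟨hwS, by push_neg; exact ⟨hwu, hxw.symm⟩⟩
        · rintro ⟨hzS, hz⟩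
          push_neg at hz
          by_cases h1 : z = v
          · exact Or.inr (Or.inl h1)
          by_cases h2 : z = w
          · exact Or.inr (Or.inr h2)
          · exact Or.inl ⟨hzS, by push_neg; exact ⟨hz.1, h1, h2, hz.2⟩⟩
      have hPDS : IsPDS G (S \ {u, x}) := by
        refine ⟨?_, _, hverts, hMf⟩
        intro t ht
        simp only [Set.mem_diff, Set.mem_insert_iff, Set.mem_singleton_iff, not_and, not_not,
          not_or] at ht
        by_cases htu : t = u
        · subst htu
          exact ⟨v, ⟨hvS, by simp only [Set.mem_insert_iff, Set.mem_singleton_iff, not_or]; exact ⟨hune_v.symm, hxv.symm⟩⟩, hadj_uv.symm⟩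
        by_cases htx : t = x
        · subst htx
          exact ⟨w, ⟨hwS, by simp only [Set.mem_insert_iff, Set.mem_singleton_iff, not_or]; exact ⟨hwu, hxw.symm⟩⟩, hGwx⟩
        · have htS : t ∉ S := fun h => htx (ht h htu)
          obtain ⟨s, hsS, hst⟩ := hdom t htS
          have hsu : s ≠ u := hdomS' t htS s hsS hst
          have hsx : s ≠ x := by
            rintro rfl
            exact htS (hy t hst)
          exact ⟨s, ⟨hsS, by simp only [Set.mem_insert_iff, Set.mem_singleton_iff, not_or]; exact ⟨hsu, hsx⟩⟩, hst⟩
      have hlt : (S \ {u, x}).ncard < S.ncard := by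
        apply Set.ncard_lt_ncard _ (Set.toFinite S)
        constructor
        · exact Set.diff_subset
        · intro hsub
          have := hsub hus
          simp at this
      have hle := Nat.sInf_le (s := {n | ∃ S : Set V, IsPDS G S ∧ S.ncard = n})
        ⟨S \ {u, x}, hPDS, rfl⟩
      omega
  · -- Case A : w ∉ S
    apply finish w hwS
    have hclosed2 : ∀ a ∈ ({u, v} : Set V), ∀ b, M.Adj a b → b ∈ ({u, v} : Set V) := by
      rintro a ha b hab
      simp only [Set.mem_insert_iff, Set.mem_singleton_iff] at ha ⊢
      rcases ha with rfl | rfl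
      · exact Or.inr (key hMuv b hab)
      · exact Or.inl (key hMuv.symm b hab)
    have hMd := matching_deleteVerts hMm {u, v} hclosed2
    have hd : Disjoint (M.deleteVerts {u, v}).support (G.subgraphOfAdj hvw).support := by
      rw [hMd.support_eq_verts, (Subgraph.IsMatching.subgraphOfAdj hvw).support_eq_verts]
      simp only [Subgraph.deleteVerts_verts, subgraphOfAdj_verts, hMv]
      rw [Set.disjoint_left]
      intro z hz1 hz2
      simp only [Set.mem_diff, Set.mem_insert_iff, Set.mem_singleton_iff, not_or] at hz1
      simp only [Set.mem_insert_iff, Set.mem_singleton_iff] at hz2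
      rcases hz2 with rfl | rfl
      · exact hz1.2.2 rfl
      · exact hwS hz1.1
    refine ⟨M.deleteVerts {u, v} ⊔ G.subgraphOfAdj hvw, ?_,
      hMd.sup (Subgraph.IsMatching.subgraphOfAdj hvw) hd⟩
    simp only [Subgraph.verts_sup, Subgraph.deleteVerts_verts, subgraphOfAdj_verts, hMv]
    ext z
    simp only [Set.mem_union, Set.mem_diff, Set.mem_insert_iff, Set.mem_singleton_iff]
    constructor
    · rintro (⟨hzS, hz⟩ | rfl | rfl)
      · push_neg at hz
        exact Or.inr ⟨hzS, hz.1⟩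
      · exact Or.inr ⟨hvS, hune_v.symm⟩
      · exact Or.inl rfl
    · rintro (rfl | ⟨hzS, hzu⟩)
      · exact Or.inr (Or.inr rfl)
      · by_cases h1 : z = v
        · exact Or.inr (Or.inl h1)
        · exact Or.inl ⟨hzS, by push_neg; exact ⟨hzu, h1⟩⟩
end

section
/- If G is a connected block graph of order at least three and u is a vertex of G that is not a cut-vertex, then there exists a minimum paired-dominating set of G not containing u. -/
open SimpleGraph

/-!
A non-cut-vertex `u` of a block graph is simplicial: two neighbours of `u` are joined by a path
avoiding `u`, which closes up through `u` to a cycle; the vertex set of a cycle induces a graph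
without cut-vertices, so it lies in a block, and blocks are complete.

Let `S` be a minimum paired-dominating set containing `u`, with `u` paired to `w`. As `u` is
simplicial, `S \ {u}` still dominates. As `u` is not a cut-vertex and there are at least three
vertices, `w` has a neighbour `x ≠ u`. If `x ∉ S`, pair `w` with `x` instead of `u`. If `x ∈ S` is
paired with `y`, then pairing `w` with `x` makes `S \ {u, y}` perfectly matchable; by minimality
it does not dominate, and the vertex `v` it misses lies outside `S` and is adjacent to `y`, so `y`
can be paired with `v`. Either way `u` is exchanged for a vertex outside `S`.
-/

namespace SimpleGraph.Walk

variable {V : Type*} {G : SimpleGraph V}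

lemma reachable_induce_of_support_subset {s : Set V} {x y : V} (p : G.Walk x y)
    (h : {z | z ∈ p.support} ⊆ s) :
    (G.induce s).Reachable ⟨x, h p.start_mem_support⟩ ⟨y, h p.end_mem_support⟩ :=
  (p.connected_induce_support ⟨x, p.start_mem_support⟩ ⟨y, p.end_mem_support⟩).map
    (G.induceHomOfLE h).toHom

lemma IsPath.end_notMem_support_takeUntil [DecidableEq V] {u v w : V} {p : G.Walk u v}
    (hp : p.IsPath) (hw : w ∈ p.support) (hwv : w ≠ v) : v ∉ (p.takeUntil w hw).support := by
  intro hv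
  have hnd := hp.support_nodup
  rw [← p.take_spec hw, support_append, List.nodup_append] at hnd
  exact hnd.2.2 v hv v ((p.dropUntil w hw).end_mem_tail_support_of_ne hwv) rfl

/-- Deleting the base vertex of a cycle leaves a path. -/
lemma IsCycle.preconnected_induce_support_diff_self {v : V} {c : G.Walk v v} (hc : c.IsCycle) :
    (G.induce ({z | z ∈ c.support} \ {v})).Preconnected := by
  classical
  have htail : c.tail.support = c.support.tail := c.support_tail_of_not_nil hc.not_nil
  have mem_tail : ∀ z ∈ {z | z ∈ c.support} \ {v}, z ∈ c.tail.support := fun z hz => by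
    rw [htail]
    exact ((c.mem_support_iff).mp hz.1).resolve_left hz.2
  have of_mem_tail : ∀ z ∈ c.tail.support, z ∈ c.support := fun z hz => by
    rw [htail] at hz
    exact List.mem_of_mem_tail hz
  rintro ⟨x, hx⟩ ⟨y, hy⟩
  have hxv := hc.isPath_tail.end_notMem_support_takeUntil (mem_tail x hx) hx.2
  have hyv := hc.isPath_tail.end_notMem_support_takeUntil (mem_tail y hy) hy.2
  let q := (c.tail.takeUntil x (mem_tail x hx)).reverse.append (c.tail.takeUntil y (mem_tail y hy))
  have hq : {z | z ∈ q.support} ⊆ {z | z ∈ c.support} \ {v} := by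
    intro z hz
    simp only [q, Set.mem_ofPred_eq, mem_support_append_iff, support_reverse,
      List.mem_reverse] at hz
    refine ⟨?_, ?_⟩
    · exact of_mem_tail z (hz.elim (support_takeUntil_subset_support _ _ ·)
        (support_takeUntil_subset_support _ _ ·))
    · rintro rfl
      exact hz.elim hxv hyv
  exact q.reachable_induce_of_support_subset hq

lemma IsCycle.preconnected_induce_support_diff {u : V} {c : G.Walk u u} (hc : c.IsCycle) (v : V) :
    (G.induce ({z | z ∈ c.support} \ {v})).Preconnected := by
  classical
  by_cases hv : v ∈ c.support
  · have hrot : {z | z ∈ (c.rotate v hv).support} = {z | z ∈ c.support} :=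
      Set.ext fun z => c.mem_support_rotate_iff v hv
    have := (hc.rotate hv).preconnected_induce_support_diff_self
    rwa [hrot] at this
  · have hdiff : {z | z ∈ c.support} \ {v} = {z | z ∈ c.support} := Set.sdiff_singleton_eq_self hv
    rw [hdiff]
    exact c.connected_induce_support.preconnected

end SimpleGraph.Walk

section Blocks

variable {V : Type*} {G : SimpleGraph V}

lemma not_isCutVertex_induce_of_preconnected {W : Set V} (v : W)
    (h : (G.induce (W \ {v.1})).Preconnected) : ¬ IsCutVertex (G.induce W) v := by
  rintro ⟨x, y, hx, hy, -, hxy⟩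
  let f : G.induce (W \ {v.1}) →g (G.induce W).induce {v}ᶜ :=
    { toFun := fun z => ⟨⟨z, z.2.1⟩, fun hz => z.2.2 (congrArg Subtype.val hz)⟩
      map_rel' := fun hz => hz }
  have hxv : x.1 ∉ ({v.1} : Set V) := fun hxv => hx (Subtype.ext hxv)
  have hyv : y.1 ∉ ({v.1} : Set V) := fun hyv => hy (Subtype.ext hyv)
  exact hxy ((h ⟨x, x.2, hxv⟩ ⟨y, y.2, hyv⟩).map f)

lemma SimpleGraph.Walk.IsCycle.not_isCutVertex_induce_support {u : V} {c : G.Walk u u}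
    (hc : c.IsCycle) (v : {z | z ∈ c.support}) :
    ¬ IsCutVertex (G.induce {z | z ∈ c.support}) v :=
  not_isCutVertex_induce_of_preconnected v (hc.preconnected_induce_support_diff v)

lemma exists_isBlock_superset [Finite V] {W : Set V} (hW : (G.induce W).Connected)
    (hWcut : ∀ v : W, ¬ IsCutVertex (G.induce W) v) : ∃ B, W ⊆ B ∧ IsBlock G B := by
  let good : Set (Set V) := {C | W ⊆ C ∧ (G.induce C).Connected ∧
    ∀ v : C, ¬ IsCutVertex (G.induce C) v}
  obtain ⟨B, ⟨hWB, hB, hBcut⟩, hmax⟩ :=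
    good.toFinite.exists_maximal ⟨W, subset_rfl, hW, hWcut⟩
  exact ⟨B, hWB, hB, hBcut, fun C hBC hC hCcut =>
    (hmax ⟨hWB.trans hBC, hC, hCcut⟩ hBC).antisymm hBC⟩

lemma IsBlockGraph.adj_of_mem_support_of_isCycle [Finite V] (hbg : IsBlockGraph G) {u a b : V}
    {c : G.Walk u u} (hc : c.IsCycle) (ha : a ∈ c.support) (hb : b ∈ c.support) (hab : a ≠ b) :
    G.Adj a b := by
  obtain ⟨B, hcB, hB⟩ := exists_isBlock_superset c.connected_induce_support
    hc.not_isCutVertex_induce_support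
  exact hbg.2 B hB a (hcB ha) b (hcB hb) hab

open SimpleGraph.Walk in
lemma IsBlockGraph.adj_of_adj_of_not_isCutVertex [Finite V] (hbg : IsBlockGraph G) {u a b : V}
    (hu : ¬ IsCutVertex G u) (ha : G.Adj u a) (hb : G.Adj u b) (hab : a ≠ b) : G.Adj a b := by
  have ha' : a ∈ ({u}ᶜ : Set V) := ha.ne'
  have hb' : b ∈ ({u}ᶜ : Set V) := hb.ne'
  have hreach : (G.induce {u}ᶜ).Reachable ⟨a, ha'⟩ ⟨b, hb'⟩ := by
    by_contra h
    exact hu ⟨a, b, ha', hb', ⟨cons ha.symm (cons hb nil)⟩, h⟩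
  obtain ⟨q, hq⟩ := hreach.exists_isPath
  obtain ⟨p, hp, hup⟩ : ∃ p : G.Walk a b, p.IsPath ∧ u ∉ p.support := by
    have hup : u ∉ (q.map (Embedding.induce {u}ᶜ).toHom).support := by
      rw [Walk.support_map, List.mem_map]
      rintro ⟨z, -, hz⟩
      exact z.2 hz
    exact ⟨_, hq.map Subtype.val_injective, hup⟩
  have hc : (cons ha (p.concat hb.symm)).IsCycle := by
    rw [cons_isCycle_iff]
    refine ⟨hp.concat hup hb.symm, ?_⟩
    intro hmem
    rw [edges_concat, List.concat_eq_append, List.mem_append, List.mem_singleton] at hmem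
    rcases hmem with h | h
    · exact hup (p.fst_mem_support_of_mem_edges h)
    · rcases Sym2.eq_iff.mp h with ⟨-, h⟩ | ⟨-, h⟩
      exacts [ha.ne' h, hab h]
  exact hbg.adj_of_mem_support_of_isCycle hc (by simp) (by simp) hab

lemma exists_adj_ne_of_not_isCutVertex [Fintype V] {u w : V}
    (hG : G.Connected) (h3 : 3 ≤ Fintype.card V) (hu : ¬ IsCutVertex G u) (huw : G.Adj u w) :
    ∃ x, G.Adj w x ∧ x ≠ u := by
  by_contra! h
  obtain ⟨z, hzu, hzw⟩ := Cardinal.exists_ne_ne_of_three_le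
    (by rw [Cardinal.mk_fintype]; exact_mod_cast h3) u w
  refine hu ⟨w, z, huw.ne', hzu, hG.preconnected w z, ?_⟩
  rintro ⟨q⟩
  have hnil : ¬ q.Nil := q.not_nil_of_ne fun h => hzw (congrArg Subtype.val h).symm
  exact q.snd.2 (h _ (q.adj_snd hnil))

end Blocks

section PairedDomination

variable {V : Type*} {G : SimpleGraph V} {S T : Set V} {u w : V}

def IsDominating (G : SimpleGraph V) (S : Set V) : Prop :=
  ∀ v ∉ S, ∃ u ∈ S, G.Adj u v

def Matchable (G : SimpleGraph V) (S : Set V) : Prop :=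
  ∃ M : G.Subgraph, M.verts = S ∧ M.IsMatching

lemma isPDS_iff : IsPDS G S ↔ IsDominating G S ∧ Matchable G S := Iff.rfl

lemma IsDominating.mono (hS : IsDominating G S) (hST : S ⊆ T) : IsDominating G T := fun v hv =>
  let ⟨u, hu, huv⟩ := hS v (fun h => hv (hST h))
  ⟨u, hST hu, huv⟩

lemma IsDominating.diff_singleton_of_simplicial (hS : IsDominating G S) (hwS : w ∈ S)
    (huw : G.Adj u w) (hsimp : ∀ ⦃a b⦄, G.Adj u a → G.Adj u b → a ≠ b → G.Adj a b) :
    IsDominating G (S \ {u}) := by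
  have hw : w ∈ S \ {u} := ⟨hwS, huw.ne'⟩
  intro v hv
  by_cases hvu : v = u
  · exact ⟨w, hw, hvu ▸ huw.symm⟩
  obtain ⟨s, hs, hsv⟩ := hS v fun hvS => hv ⟨hvS, hvu⟩
  by_cases hsu : s = u
  · subst hsu
    exact ⟨w, hw, hsimp huw hsv fun hwv => hv (hwv ▸ hw)⟩
  · exact ⟨s, ⟨hs, hsu⟩, hsv⟩

lemma matchable_empty : Matchable G ∅ :=
  ⟨⊥, rfl, fun _ hv => hv.elim⟩

lemma Matchable.insert_pair {a b : V} (hS : Matchable G S) (hab : G.Adj a b) (ha : a ∉ S)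
    (hb : b ∉ S) : Matchable G (insert a (insert b S)) := by
  obtain ⟨M, rfl, hM⟩ := hS
  refine ⟨M ⊔ G.subgraphOfAdj hab, ?_, hM.sup (.subgraphOfAdj hab) ?_⟩
  · ext z
    simp only [Subgraph.verts_sup, subgraphOfAdj_verts, Set.mem_union, Set.mem_insert_iff,
      Set.mem_singleton_iff]
    tauto
  · rw [hM.support_eq_verts, (Subgraph.IsMatching.subgraphOfAdj hab).support_eq_verts,
      subgraphOfAdj_verts, Set.disjoint_insert_right, Set.disjoint_singleton_right]
    exact ⟨ha, hb⟩

lemma Matchable.exists_adj_diff_pair (hS : Matchable G S) (hu : u ∈ S) :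
    ∃ w ∈ S, G.Adj u w ∧ Matchable G (S \ {u, w}) := by
  obtain ⟨M, rfl, hM⟩ := hS
  obtain ⟨w, huw, -⟩ := hM hu
  refine ⟨w, M.edge_vert huw.symm, M.adj_sub huw, M.deleteVerts {u, w}, rfl, ?_⟩
  rintro v ⟨hv, hvuw⟩
  obtain ⟨x, hvx, hx⟩ := hM hv
  simp only [Set.mem_insert_iff, Set.mem_singleton_iff, not_or] at hvuw
  have hxu : x ≠ u := by
    rintro rfl
    exact hvuw.2 (hM.eq_of_adj_left huw hvx.symm).symm
  have hxw : x ≠ w := by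
    rintro rfl
    exact hvuw.1 (hM.eq_of_adj_right huw hvx).symm
  refine ⟨x, ?_, fun y hy => hx y (Subgraph.deleteVerts_adj.mp hy).2.2.2.2⟩
  exact Subgraph.deleteVerts_adj.mpr ⟨hv, by simp [hvuw.1, hvuw.2], M.edge_vert hvx.symm,
    by simp [hxu, hxw], hvx⟩

lemma exists_isPDS [Finite V] (h : ∀ v, ∃ w, G.Adj v w) : ∃ S, IsPDS G S := by
  obtain ⟨S, hS, hmax⟩ := {S | Matchable G S}.toFinite.exists_maximal ⟨∅, matchable_empty⟩
  refine ⟨S, fun v hv => ?_, hS⟩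
  obtain ⟨w, hvw⟩ := h v
  by_contra! hdom
  have hw : w ∉ S := fun hw => hdom w hw hvw.symm
  exact hv (hmax (hS.insert_pair hvw hv hw)
    ((Set.subset_insert _ _).trans (Set.subset_insert _ _)) (Set.mem_insert v _))

lemma gammaPr_le_ncard (h : IsPDS G S) : gammaPr G ≤ S.ncard :=
  Nat.sInf_le ⟨S, h, rfl⟩

lemma exists_isPDS_ncard_eq_gammaPr (h : ∃ S, IsPDS G S) :
    ∃ S, IsPDS G S ∧ S.ncard = gammaPr G :=
  let ⟨S, hS⟩ := h
  Nat.sInf_mem (s := {n | ∃ S, IsPDS G S ∧ S.ncard = n}) ⟨S.ncard, S, hS, rfl⟩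

end PairedDomination

section Exchange

variable {V : Type*} {G : SimpleGraph V} {S : Set V} {u w x : V}

lemma insert_insert_diff_pair {a b c : V} (ha : a ∈ S) (hac : a ≠ c) :
    insert a (insert b (S \ {c, a})) = insert b (S \ {c}) := by
  ext z
  simp only [Set.mem_insert_iff, Set.mem_sdiff, Set.mem_singleton_iff]
  grind

lemma isPDS_insert_diff_of_adj_notMem (hdom : IsDominating G (S \ {u}))
    (hM : Matchable G (S \ {u, w})) (hwS : w ∈ S) (hwu : w ≠ u) (hwx : G.Adj w x) (hxS : x ∉ S) :
    IsPDS G (insert x (S \ {u})) := by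
  refine ⟨hdom.mono (Set.subset_insert _ _), ?_⟩
  rw [← insert_insert_diff_pair hwS hwu]
  exact hM.insert_pair hwx (by simp) (by simp [hxS])

lemma exists_isPDS_insert_diff_of_adj_mem (hS : S.Finite)
    (hSmin : S.ncard = gammaPr G) (hdom : IsDominating G (S \ {u}))
    (hM : Matchable G (S \ {u, w})) (huS : u ∈ S) (hwS : w ∈ S) (huw : G.Adj u w)
    (hwx : G.Adj w x) (hxS : x ∈ S) (hxu : x ≠ u) :
    ∃ v ∉ S, IsPDS G (insert v (S \ {u})) := by
  obtain ⟨y, ⟨hyS, hyuw⟩, hxy, hM'⟩ :=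
    hM.exists_adj_diff_pair (u := x) ⟨hxS, by simp [hxu, hwx.ne']⟩
  simp only [Set.mem_insert_iff, Set.mem_singleton_iff, not_or] at hyuw
  have hT : Matchable G (S \ {u, y}) := by
    have h := hM'.insert_pair hwx (by simp) (by simp)
    convert h using 1
    ext z
    simp only [Set.mem_insert_iff, Set.mem_sdiff, Set.mem_singleton_iff]
    grind [hwx.ne', huw.ne', hxy.ne']
  have hlt : (S \ {u, y}).ncard < S.ncard :=
    Set.ncard_lt_ncard (Set.sdiff_ssubset_left_iff.mpr ⟨u, huS, by simp⟩) hS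
  have hTdom : ¬ IsDominating G (S \ {u, y}) := fun hTdom =>
    (hSmin ▸ gammaPr_le_ncard ⟨hTdom, hT⟩).not_gt hlt
  simp only [IsDominating, not_forall, not_exists, not_and, exists_prop] at hTdom
  obtain ⟨v, hvT, hv⟩ := hTdom
  have hvu : v ≠ u := fun hvu => hv w ⟨hwS, by simp [huw.ne', Ne.symm hyuw.2]⟩ (hvu ▸ huw.symm)
  have hvy : v ≠ y := fun hvy => hv x ⟨hxS, by simp [hxu, hxy.ne]⟩ (hvy ▸ hxy)
  have hvS : v ∉ S := fun hvS => hvT ⟨hvS, by simp [hvu, hvy]⟩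
  obtain ⟨s, ⟨hsS, hsu⟩, hsv⟩ := hdom v fun hv => hvS hv.1
  obtain rfl : s = y := by
    by_contra hsy
    exact hv s ⟨hsS, by simp_all⟩ hsv
  refine ⟨v, hvS, hdom.mono (Set.subset_insert _ _), ?_⟩
  rw [← insert_insert_diff_pair hsS hsu]
  exact hT.insert_pair hsv (by simp) hvT

end Exchange

/-- If `G` is a connected block graph of order at least three and `u` is not a
cut-vertex, then some minimum paired-dominating set of `G` avoids `u`. -/
theorem stmt1 {V : Type*} [Fintype V] (G : SimpleGraph V)
    (hbg : IsBlockGraph G) (h3 : 3 ≤ Fintype.card V)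
    (u : V) (hu : ¬ IsCutVertex G u) :
    ∃ S : Set V, IsPDS G S ∧ S.ncard = gammaPr G ∧ u ∉ S := by
  have : Nontrivial V := Fintype.one_lt_card_iff_nontrivial.mp (by omega)
  obtain ⟨S, hS, hSmin⟩ :=
    exists_isPDS_ncard_eq_gammaPr (exists_isPDS hbg.1.preconnected.exists_adj_of_nontrivial)
  by_cases huS : u ∈ S
  case neg => exact ⟨S, hS, hSmin, huS⟩
  obtain ⟨hSdom, hSM⟩ := isPDS_iff.mp hS
  obtain ⟨w, hwS, huw, hM⟩ := hSM.exists_adj_diff_pair huS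
  have hdom := hSdom.diff_singleton_of_simplicial hwS huw fun _ _ =>
    hbg.adj_of_adj_of_not_isCutVertex hu
  obtain ⟨x, hwx, hxu⟩ := exists_adj_ne_of_not_isCutVertex hbg.1 h3 hu huw
  obtain ⟨v, hvS, hv⟩ : ∃ v ∉ S, IsPDS G (insert v (S \ {u})) := by
    by_cases hxS : x ∈ S
    · exact exists_isPDS_insert_diff_of_adj_mem S.toFinite hSmin hdom hM huS hwS huw hwx hxS hxu
    · exact ⟨x, hxS, isPDS_insert_diff_of_adj_notMem hdom hM hwS huw.ne' hwx hxS⟩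
  refine ⟨_, hv, by rw [Set.ncard_exchange hvS huS, hSmin], ?_⟩
  rintro (rfl | ⟨-, h⟩)
  exacts [hvS huS, h rfl]
end

section
/- For the path P_n on n ≥ 2 vertices, γ_pr(P_n) = 2⌈n/4⌉. -/
open SimpleGraph

/-!
A paired-dominating set `S` is total: every vertex, inside `S` or not, has a neighbour in `S`
(its partner, resp. a dominator). In `P_n` every vertex has at most two neighbours, so
`n ≤ 2 |S|`; as `|S|` is even, `|S| ≥ 2⌈n/4⌉`. Conversely the pairs `{4k + 1, 4k + 2}`,
`k < ⌈n/4⌉`, each dominating the block `{4k, …, 4k + 3}` (the last pair shifted to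
`{n - 2, n - 1}`), form a paired-dominating set of that size.
-/

section PairedDomination

variable {V : Type*} {G : SimpleGraph V} {S : Set V}

theorem IsPDS.exists_adj_mem (hS : IsPDS G S) (v : V) : ∃ u ∈ S, G.Adj u v := by
  by_cases hv : v ∈ S
  · obtain ⟨M, hMS, hM⟩ := hS.2
    obtain ⟨u, hvu, -⟩ := hM (hMS ▸ hv)
    exact ⟨u, hMS ▸ M.edge_vert hvu.symm, (M.adj_sub hvu).symm⟩
  · exact hS.1 v hv

theorem IsPDS.even_ncard [Finite V] (hS : IsPDS G S) : Even S.ncard := by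
  classical
  obtain ⟨M, rfl, hM⟩ := hS.2
  have := Fintype.ofFinite V
  rw [Set.ncard_eq_toFinset_card']
  exact hM.even_card

theorem IsPDS.card_le_mul_ncard [Fintype V] [DecidableRel G.Adj] {d : ℕ} (hS : IsPDS G S)
    (hdeg : ∀ v, G.degree v ≤ d) : Fintype.card V ≤ d * S.ncard := by
  classical
  have hcover : (Finset.univ : Finset V) ⊆ S.toFinset.biUnion fun u => G.neighborFinset u := by
    intro v _
    obtain ⟨u, hu, huv⟩ := hS.exists_adj_mem v
    exact Finset.mem_biUnion.2 ⟨u, Set.mem_toFinset.2 hu, (G.mem_neighborFinset u v).2 huv⟩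
  calc Fintype.card V ≤ ∑ u ∈ S.toFinset, (G.neighborFinset u).card :=
        (Finset.card_le_card hcover).trans Finset.card_biUnion_le
    _ ≤ S.toFinset.card * d := Finset.sum_le_card_nsmul _ _ _ fun u _ => hdeg u
    _ = d * S.ncard := by rw [Set.ncard_eq_toFinset_card', mul_comm]

theorem exists_isMatching_verts_eq_iUnion {ι : Type*} {u w : ι → V}
    (hadj : ∀ i, G.Adj (u i) (w i))
    (hdisj : Pairwise fun i j => Disjoint ({u i, w i} : Set V) {u j, w j}) :
    ∃ M : G.Subgraph, M.verts = ⋃ i, {u i, w i} ∧ M.IsMatching :=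
  ⟨⨆ i, G.subgraphOfAdj (hadj i), by simp,
    Subgraph.IsMatching.iSup (fun i => .subgraphOfAdj (hadj i)) (by simpa using hdisj)⟩

theorem gammaPr_le (hS : IsPDS G S) : gammaPr G ≤ S.ncard :=
  Nat.sInf_le ⟨S, hS, rfl⟩

theorem le_gammaPr {m : ℕ} (hS : IsPDS G S) (h : ∀ T, IsPDS G T → m ≤ T.ncard) :
    m ≤ gammaPr G :=
  le_csInf ⟨_, S, hS, rfl⟩ fun _ ⟨T, hT, hTm⟩ => hTm ▸ h T hT

end PairedDomination

theorem pathGraph_degree_le_two {n : ℕ} (v : Fin n) [Fintype ((pathGraph n).neighborSet v)] :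
    (pathGraph n).degree v ≤ 2 := by
  classical
  refine (degree_le_of_le pathGraph_le_cycleGraph).trans ?_
  match n, v with
  | 1, v => simp [cycleGraph_one_eq_bot]
  | _ + 2, v => exact cycleGraph_degree_two_le.trans_le Finset.card_le_two

theorem IsPDS.two_mul_le_ncard_pathGraph {n : ℕ} {S : Set (Fin n)}
    (hS : IsPDS (pathGraph n) S) : 2 * ((n + 3) / 4) ≤ S.ncard := by
  classical
  have hcard := hS.card_le_mul_ncard fun v => pathGraph_degree_le_two v
  obtain ⟨p, hp⟩ := hS.even_ncard
  rw [Fintype.card_fin] at hcard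
  omega

section PathPairs

variable {n : ℕ} (hn : 2 ≤ n)

def pathPairLeft (k : ℕ) : Fin n := ⟨min (4 * k + 1) (n - 2), by omega⟩

def pathPairRight (k : ℕ) : Fin n := ⟨min (4 * k + 1) (n - 2) + 1, by omega⟩

def pathPDS : Set (Fin n) :=
  ⋃ k : Fin ((n + 3) / 4), {pathPairLeft hn k, pathPairRight hn k}

theorem pathGraph_adj_pathPairLeft_pathPairRight (k : ℕ) :
    (pathGraph n).Adj (pathPairLeft hn k) (pathPairRight hn k) := by
  simp [pathGraph_adj, pathPairLeft, pathPairRight]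

theorem pathPair_disjoint {k l : ℕ} (hkl : k < l) (hl : l < (n + 3) / 4) :
    Disjoint ({pathPairLeft hn k, pathPairRight hn k} : Set (Fin n))
      {pathPairLeft hn l, pathPairRight hn l} := by
  simp only [Set.disjoint_insert_left, Set.disjoint_insert_right, Set.disjoint_singleton,
    Set.mem_insert_iff, Set.mem_singleton_iff, ne_eq, Fin.ext_iff, pathPairLeft, pathPairRight]
  omega

theorem pathPair_dominates (v : Fin n) :
    v = pathPairLeft hn (v / 4) ∨ v = pathPairRight hn (v / 4) ∨
      (pathGraph n).Adj (pathPairLeft hn (v / 4)) v ∨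
      (pathGraph n).Adj (pathPairRight hn (v / 4)) v := by
  simp only [Fin.ext_iff, pathGraph_adj, pathPairLeft, pathPairRight]
  omega

theorem isPDS_pathPDS : IsPDS (pathGraph n) (pathPDS hn) := by
  refine ⟨fun v hv => ?_, exists_isMatching_verts_eq_iUnion
    (fun k => pathGraph_adj_pathPairLeft_pathPairRight hn k) fun k l hkl => ?_⟩
  · have hk : v / 4 < (n + 3) / 4 := by omega
    have hmem (x : Fin n) (hx : x = pathPairLeft hn (v / 4) ∨ x = pathPairRight hn (v / 4)) :
        x ∈ pathPDS hn :=
      Set.mem_iUnion.2 ⟨⟨v / 4, hk⟩, hx⟩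
    rcases pathPair_dominates hn v with h | h | h | h
    · exact absurd (hmem v (.inl h)) hv
    · exact absurd (hmem v (.inr h)) hv
    · exact ⟨_, hmem _ (.inl rfl), h⟩
    · exact ⟨_, hmem _ (.inr rfl), h⟩
  · rcases lt_or_gt_of_ne (Fin.val_ne_of_ne hkl) with h | h
    · exact pathPair_disjoint hn h l.2
    · exact (pathPair_disjoint hn h k.2).symm

theorem ncard_pathPDS_le : (pathPDS hn).ncard ≤ 2 * ((n + 3) / 4) := by
  let pair (k : Fin ((n + 3) / 4)) : Set (Fin n) := {pathPairLeft hn k, pathPairRight hn k}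
  calc (pathPDS hn).ncard ≤ ∑ k, (pair k).ncard := by
        simpa [pathPDS] using Finset.set_ncard_biUnion_le Finset.univ pair
    _ ≤ ∑ _k : Fin ((n + 3) / 4), 2 :=
        Finset.sum_le_sum fun _ _ => (Set.ncard_insert_le _ _).trans_eq (by simp)
    _ = 2 * ((n + 3) / 4) := by simp [mul_comm]

end PathPairs

/-- For the path `P_n` on `n ≥ 2` vertices, `γ_pr(P_n) = 2⌈n/4⌉`. -/
theorem stmt13 (n : ℕ) (hn : 2 ≤ n) :
    gammaPr (SimpleGraph.pathGraph n) = 2 * ((n + 3) / 4) :=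
  le_antisymm ((gammaPr_le (isPDS_pathPDS hn)).trans (ncard_pathPDS_le hn))
    (le_gammaPr (isPDS_pathPDS hn) fun _ hS => hS.two_mul_le_ncard_pathGraph)
end
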